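/- Let c be a child sequence of length n, τ a uniformly random permutation of [n], C = τ(c), S_i = sum_{j≤i}(C_j - 1), and M_i = (S_i + 1)/(n - i). Then for each i < ⌊n/2⌋, the predictable quadratic variation satisfies Var(M_{i+1} | F_i) = E[M_{i+1}^2 | F_i] - M_i^2 ≤ (1/(n-i-1)^2) · (3 + (sum_{j=1}^n c_j^2)/(n-i)) ≤ 4(3 + 2a)/n^2, where a = (sum_{j=1}^n c_j^2)/n. Consequently sum_{i=1}^{⌊n/2⌋} Var(M_i | F_{i-1}) ≤ 4(3+2a)/n. -/
import Mathlib


/-- Partial sum `S_k = ∑_{i=1}^k (c_i - 1)` of a length-`n` sequence (0-indexed). -/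
def pS {n : ℕ} (c : Fin n → ℕ) (k : ℕ) : ℤ :=
  ∑ i : Fin n, if (i : ℕ) < k then (c i : ℤ) - 1 else 0

/-- Cyclic shift of a sequence by `j`. -/
def cshift {n : ℕ} (j : Fin n) (c : Fin n → ℕ) : Fin n → ℕ := fun i => c (i + j)

/-- A tree sequence: partial sums are nonnegative before index `n`
(equivalently, the queue `S_i + 1` stays strictly positive for `i < n`). -/
def IsTreeSeq {n : ℕ} (c : Fin n → ℕ) : Prop := ∀ k < n, 0 ≤ pS c k


/-- The atom of the sigma-field `F_i = σ(S_0,…,S_i)` containing `c ∘ τ`. -/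
def atomF {n : ℕ} (c : Fin n → ℕ) (i : ℕ) (τ : Equiv.Perm (Fin n)) :
    Finset (Equiv.Perm (Fin n)) :=
  Finset.univ.filter fun τ' => ∀ j ≤ i, pS (c ∘ τ') j = pS (c ∘ τ) j

/-- The martingale `M_i = (S_i + 1)/(n - i)`. -/
noncomputable def mart {n : ℕ} (c : Fin n → ℕ) (τ : Equiv.Perm (Fin n)) (i : ℕ) : ℝ :=
  ((pS (c ∘ τ) i : ℝ) + 1) / ((n : ℝ) - i)

/-- The predictable quadratic variation `Var(M_{i+1}|F_i) = E[M_{i+1}^2|F_i] - M_i^2`,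
evaluated at (the atom of) `τ`. -/
noncomputable def condVar {n : ℕ} (c : Fin n → ℕ) (i : ℕ) (τ : Equiv.Perm (Fin n)) : ℝ :=
  (∑ τ' ∈ atomF c i τ, (mart c τ' (i + 1)) ^ 2) / (atomF c i τ).card - (mart c τ i) ^ 2

lemma atom_swap {n : ℕ} (c : Fin n → ℕ) (i : ℕ) (τ : Equiv.Perm (Fin n))
    (p k : Fin n) (hp : i ≤ (p:ℕ)) (hk : i ≤ (k:ℕ)) (τ' : Equiv.Perm (Fin n))
    (h : τ' ∈ atomF c i τ) : τ' * Equiv.swap p k ∈ atomF c i τ := by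
  simp only [atomF, Finset.mem_filter, Finset.mem_univ, true_and] at h ⊢
  intro j hj
  rw [← h j hj]
  unfold pS
  refine Finset.sum_congr rfl fun l _ => ?_
  by_cases hl : (l:ℕ) < j
  · have hlp : l ≠ p := by intro e; subst e; omega
    have hlk : l ≠ k := by intro e; subst e; omega
    simp [hl, Function.comp, Equiv.Perm.mul_apply,
      Equiv.swap_apply_of_ne_of_ne hlp hlk]
  · simp [hl]

lemma sum_atom_apply_eq {n : ℕ} (c : Fin n → ℕ) (i : ℕ) (τ : Equiv.Perm (Fin n))
    (p k : Fin n) (hp : i ≤ (p:ℕ)) (hk : i ≤ (k:ℕ)) (g : Fin n → ℝ) :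
    ∑ τ' ∈ atomF c i τ, g (τ' p) = ∑ τ' ∈ atomF c i τ, g (τ' k) := by
  refine Finset.sum_equiv (Equiv.mulRight (Equiv.swap p k)) (fun τ' => ?_) (fun τ' hτ' => ?_)
  · constructor
    · intro h; exact atom_swap c i τ p k hp hk τ' h
    · intro h
      have := atom_swap c i τ p k hp hk _ h
      simpa [mul_assoc] using this
  · simp [Equiv.Perm.mul_apply, Equiv.swap_apply_right]

lemma pS_succ {n : ℕ} (f : Fin n → ℕ) (i : ℕ) (hi : i < n) :
    pS f (i+1) = pS f i + ((f ⟨i,hi⟩ : ℤ) - 1) := by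
  unfold pS
  have key : ∀ l : Fin n, (if (l:ℕ) < i+1 then (f l:ℤ)-1 else 0)
      = (if (l:ℕ) < i then (f l:ℤ)-1 else 0) + (if l = ⟨i,hi⟩ then (f l:ℤ)-1 else 0) := by
    intro l
    rcases eq_or_ne l ⟨i,hi⟩ with h|h
    · subst h; simp
    · have h1 : (l:ℕ) ≠ i := fun e => h (Fin.ext e)
      by_cases hl : (l:ℕ) < i
      · have : (l:ℕ) < i + 1 := by omega
        simp [h, hl, this]
      · have : ¬ ((l:ℕ) < i + 1) := by omega
        simp [h, hl, this]
  simp_rw [key, Finset.sum_add_distrib, Finset.sum_ite_eq']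
  simp

lemma card_filter_lt' {n i : ℕ} (hi : i < n) :
    (Finset.univ.filter fun k : Fin n => (k:ℕ) < i).card = i := by
  have : (Finset.univ.filter fun k : Fin n => (k:ℕ) < i) = Finset.Iio ⟨i, hi⟩ := by
    ext k
    simp [Fin.lt_def]
  rw [this, Fin.card_Iio]

lemma condVar_alg {N r D Sr SS1 SS2 Q0 : ℝ} (hN : 0 < N) (hr : 0 < r) (hD : 0 < D)
    (hD1 : D = r - 1) (hE1 : r * SS1 = N * (r - 1 - Sr)) (hE2 : r * SS2 ≤ N * Q0) :
    (N * Sr^2 + 2 * Sr * SS1 + SS2) / D^2 / N - ((Sr + 1)/r)^2 ≤ (Q0 / r) / D^2 := by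
  have hSS1 : SS1 = N * (r - 1 - Sr) / r := by
    field_simp at hE1 ⊢
    linarith
  subst hSS1
  have key : (N * Sr^2 + 2 * Sr * (N * (r - 1 - Sr) / r) + SS2) / D^2 / N - ((Sr + 1)/r)^2
      = (SS2 / N - ((r - 1 - Sr)/r)^2) / D^2 := by
    rw [hD1]
    have h1 : r - 1 ≠ 0 := by rw [← hD1]; exact ne_of_gt hD
    field_simp
    ring
  rw [key]
  have h2 : SS2 / N ≤ Q0 / r := by
    rw [div_le_div_iff₀ hN hr]
    nlinarith
  have h3 : SS2 / N - ((r - 1 - Sr)/r)^2 ≤ Q0 / r := by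
    nlinarith [sq_nonneg ((r - 1 - Sr)/r)]
  gcongr

set_option maxHeartbeats 1000000 in
lemma condVar_core {n : ℕ} (hn : 0 < n) (c : Fin n → ℕ) (hc : ∑ i, c i = n - 1)
    (i : ℕ) (hi : i + 1 < n) (τ : Equiv.Perm (Fin n)) :
    condVar c i τ ≤ ((∑ j, (c j : ℝ) ^ 2) / ((n : ℝ) - i)) / ((n : ℝ) - (i + 1)) ^ 2 := by
  have hi0 : i < n := by omega
  set p : Fin n := ⟨i, hi0⟩ with hp
  set A := atomF c i τ with hA
  have hτA : τ ∈ A := by simp [hA, atomF]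
  have hNn : 0 < A.card := Finset.card_pos.2 ⟨τ, hτA⟩
  set N : ℝ := (A.card : ℝ) with hNdef
  have hN : 0 < N := by rw [hNdef]; exact_mod_cast hNn
  set r : ℝ := (n : ℝ) - i with hrdef
  set D : ℝ := (n : ℝ) - (i + 1) with hDdef
  have hr : 0 < r := by
    have : (i : ℝ) < n := by exact_mod_cast hi0
    simp [hrdef]; linarith
  have hD : 0 < D := by
    have : ((i:ℝ) + 1) < n := by exact_mod_cast hi
    simp [hDdef]; linarith
  have hD1 : D = r - 1 := by rw [hDdef, hrdef]; ring
  set Sr : ℝ := ((pS (c ∘ τ) i : ℤ) : ℝ) with hSr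
  have hmem : ∀ τ' ∈ A, pS (c ∘ τ') i = pS (c ∘ τ) i := by
    intro τ' h
    simp only [hA, atomF, Finset.mem_filter, Finset.mem_univ, true_and] at h
    exact h i le_rfl
  -- martingale values
  have hmart0 : mart c τ i = (Sr + 1) / r := rfl
  have hmart1 : ∀ τ' ∈ A, mart c τ' (i+1) = (Sr + (c (τ' p) : ℝ)) / D := by
    intro τ' h
    unfold mart
    rw [pS_succ (c ∘ τ') i hi0, hmem τ' h]
    have : (c ∘ τ') ⟨i, hi0⟩ = c (τ' p) := rfl
    rw [this, hDdef, hSr]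
    push_cast
    ring_nf
  -- sums over the atom
  set SS1 : ℝ := ∑ τ' ∈ A, (c (τ' p) : ℝ) with hSS1def
  set SS2 : ℝ := ∑ τ' ∈ A, (c (τ' p) : ℝ)^2 with hSS2def
  set K := Finset.univ.filter fun k : Fin n => ¬ ((k:ℕ) < i) with hK
  set Kc := Finset.univ.filter fun k : Fin n => (k:ℕ) < i with hKc
  have hKcard : (K.card : ℝ) = r := by
    have h1 : Kc.card + K.card = n := by
      rw [hKc, hK, Finset.card_filter_add_card_filter_not]
      simp
    have h2 : Kc.card = i := card_filter_lt' hi0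
    have : K.card = n - i := by omega
    rw [this, hrdef]
    have : i ≤ n := le_of_lt hi0
    push_cast [this]
    ring
  have hkey : ∀ g : Fin n → ℝ,
      (K.card : ℝ) * (∑ τ' ∈ A, g (τ' p)) = ∑ τ' ∈ A, ∑ k ∈ K, g (τ' k) := by
    intro g
    rw [Finset.sum_comm]
    have : ∀ k ∈ K, ∑ τ' ∈ A, g (τ' k) = ∑ τ' ∈ A, g (τ' p) := by
      intro k hk
      have hik : i ≤ (k:ℕ) := by
        simp only [hK, Finset.mem_filter] at hk
        omega
      exact (sum_atom_apply_eq c i τ p k le_rfl hik g).symm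
    rw [Finset.sum_congr rfl this, Finset.sum_const, nsmul_eq_mul]
  -- the sum of the remaining entries is determined
  have htotal : ∀ τ' : Equiv.Perm (Fin n), ∑ k, (c (τ' k) : ℝ) = (n : ℝ) - 1 := by
    intro τ'
    rw [Equiv.sum_comp τ' (fun k => (c k : ℝ))]
    have : ((∑ i, c i : ℕ) : ℝ) = ((n - 1 : ℕ) : ℝ) := congrArg (fun m : ℕ => (m:ℝ)) hc
    push_cast at this
    rw [this, Nat.cast_sub hn]
    simp
  have hfirst : ∀ τ' ∈ A, ∑ k ∈ Kc, (c (τ' k) : ℝ) = Sr + i := by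
    intro τ' h
    have h1 : ((pS (c ∘ τ') i : ℤ) : ℝ) = ∑ k ∈ Kc, ((c (τ' k) : ℝ) - 1) := by
      rw [hKc, Finset.sum_filter]
      unfold pS
      push_cast
      rfl
    rw [hmem τ' h, ← hSr] at h1
    have h2 : ∑ k ∈ Kc, ((c (τ' k) : ℝ) - 1)
        = (∑ k ∈ Kc, (c (τ' k) : ℝ)) - (Kc.card : ℝ) := by
      rw [Finset.sum_sub_distrib, Finset.sum_const, nsmul_eq_mul, mul_one]
    have h3 : (Kc.card : ℝ) = i := by
      rw [hKc, card_filter_lt' hi0]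
    rw [h2, h3] at h1
    linarith
  have hsum1 : ∀ τ' ∈ A, ∑ k ∈ K, (c (τ' k) : ℝ) = r - 1 - Sr := by
    intro τ' h
    have hsplit : (∑ k ∈ Kc, (c (τ' k) : ℝ)) + ∑ k ∈ K, (c (τ' k) : ℝ)
        = ∑ k, (c (τ' k) : ℝ) := by
      rw [hKc, hK]
      exact Finset.sum_filter_add_sum_filter_not _ _ _
    rw [hfirst τ' h, htotal τ'] at hsplit
    rw [hrdef]
    linarith
  have hsum2 : ∀ τ' ∈ A, ∑ k ∈ K, (c (τ' k) : ℝ)^2 ≤ ∑ j, (c j : ℝ)^2 := by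
    intro τ' _
    calc ∑ k ∈ K, (c (τ' k) : ℝ)^2 ≤ ∑ k, (c (τ' k) : ℝ)^2 := by
          apply Finset.sum_le_sum_of_subset_of_nonneg (Finset.filter_subset _ _)
          intro j _ _
          positivity
      _ = ∑ j, (c j : ℝ)^2 := Equiv.sum_comp τ' (fun k => (c k : ℝ)^2)
  set Q0 : ℝ := ∑ j, (c j : ℝ)^2 with hQ0
  have hQ0nn : 0 ≤ Q0 := by rw [hQ0]; positivity
  have hE1 : r * SS1 = N * (r - 1 - Sr) := by
    have h := hkey (fun x => (c x : ℝ))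
    rw [hKcard] at h
    calc r * SS1 = ∑ τ' ∈ A, ∑ k ∈ K, (c (τ' k) : ℝ) := h
      _ = ∑ τ' ∈ A, (r - 1 - Sr) := Finset.sum_congr rfl hsum1
      _ = N * (r - 1 - Sr) := by rw [Finset.sum_const, nsmul_eq_mul]
  have hE2 : r * SS2 ≤ N * Q0 := by
    have h := hkey (fun x => (c x : ℝ)^2)
    rw [hKcard] at h
    rw [h]
    calc ∑ τ' ∈ A, ∑ k ∈ K, (c (τ' k) : ℝ)^2 ≤ ∑ τ' ∈ A, Q0 :=
          Finset.sum_le_sum hsum2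
      _ = N * Q0 := by rw [Finset.sum_const, nsmul_eq_mul]
  -- expand the second moment
  have hA2 : ∑ τ' ∈ A, (mart c τ' (i + 1))^2
      = (N * Sr^2 + 2 * Sr * SS1 + SS2) / D^2 := by
    have e1 : ∀ τ' ∈ A, (mart c τ' (i+1))^2
        = (Sr^2 + 2*Sr*(c (τ' p) : ℝ) + (c (τ' p) : ℝ)^2) / D^2 := by
      intro τ' h
      rw [hmart1 τ' h, div_pow, add_sq]
    have e2 : ∑ τ' ∈ A, (Sr^2 + 2*Sr*(c (τ' p) : ℝ) + (c (τ' p) : ℝ)^2)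
        = N * Sr^2 + 2 * Sr * SS1 + SS2 := by
      rw [Finset.sum_add_distrib, Finset.sum_add_distrib, Finset.sum_const,
        ← Finset.mul_sum, nsmul_eq_mul, ← hSS1def, ← hSS2def]
    rw [Finset.sum_congr rfl e1, ← Finset.sum_div, e2]
  clear_value SS1 SS2
  unfold condVar
  rw [← hA, hA2, ← hNdef, hmart0]
  exact condVar_alg hN hr hD hD1 hE1 hE2

/-- Variance bounds for the martingale `M_i = (S_i+1)/(n-i)` built from a
uniformly random rearrangement of a child sequence: for `i < ⌊n/2⌋`,
`Var(M_{i+1}|F_i) ≤ (3 + |c|²/(n-i))/(n-i-1)² ≤ 4(3+2a)/n²` with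
`a = |c|²/n`, and consequently `∑_{i=1}^{⌊n/2⌋} Var(M_i|F_{i-1}) ≤ 4(3+2a)/n`. -/
theorem stmt5 {n : ℕ} (hn : 0 < n) (c : Fin n → ℕ) (hc : ∑ i, c i = n - 1)
    (a : ℝ) (ha : a = (∑ i, (c i : ℝ) ^ 2) / n) :
    (∀ i < n / 2, ∀ τ : Equiv.Perm (Fin n),
      condVar c i τ ≤ (1 / ((n : ℝ) - (i + 1)) ^ 2) *
          (3 + (∑ j, (c j : ℝ) ^ 2) / ((n : ℝ) - i)) ∧
        condVar c i τ ≤ 4 * (3 + 2 * a) / (n : ℝ) ^ 2) ∧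
      ∀ τ : Equiv.Perm (Fin n),
        ∑ i ∈ Finset.range (n / 2), condVar c i τ ≤ 4 * (3 + 2 * a) / n := by
  have hn' : (0:ℝ) < n := by exact_mod_cast hn
  have hQnn : (0:ℝ) ≤ ∑ j, (c j : ℝ)^2 := by positivity
  have hQan : (∑ j, (c j : ℝ)^2) = a * n := by
    rw [ha]; field_simp
  have hann : 0 ≤ a := by
    rw [ha]; positivity
  have hhalf : (n / 2 : ℕ) < n := Nat.div_lt_self hn one_lt_two
  have main : ∀ i < n / 2, ∀ τ : Equiv.Perm (Fin n),
      condVar c i τ ≤ (1 / ((n : ℝ) - (i + 1)) ^ 2) *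
          (3 + (∑ j, (c j : ℝ) ^ 2) / ((n : ℝ) - i)) ∧
        condVar c i τ ≤ 4 * (3 + 2 * a) / (n : ℝ) ^ 2 := by
    intro i hi2 τ
    have hi1 : i + 1 ≤ n / 2 := hi2
    have hi : i + 1 < n := lt_of_le_of_lt hi1 hhalf
    have hcast1 : ((i:ℝ) + 1) ≤ (n:ℝ)/2 := by
      have h1 : ((i+1 : ℕ):ℝ) ≤ ((n/2 : ℕ):ℝ) := by exact_mod_cast hi1
      have h2 : ((n/2 : ℕ):ℝ) ≤ (n:ℝ)/2 := Nat.cast_div_le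
      push_cast at h1
      linarith
    have hD2 : (n:ℝ)/2 ≤ (n:ℝ) - (i+1) := by linarith
    have hr2 : (n:ℝ)/2 ≤ (n:ℝ) - i := by linarith
    have hD : (0:ℝ) < (n:ℝ) - (i+1) := by linarith
    have hr : (0:ℝ) < (n:ℝ) - i := by linarith
    have hcore := condVar_core hn c hc i hi τ
    have hQrnn : (0:ℝ) ≤ (∑ j, (c j : ℝ)^2) / ((n:ℝ) - i) := by positivity
    have b1 : condVar c i τ ≤ (1 / ((n : ℝ) - (i + 1)) ^ 2) *
        (3 + (∑ j, (c j : ℝ) ^ 2) / ((n : ℝ) - i)) := by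
      have e : ((∑ j, (c j : ℝ)^2) / ((n:ℝ) - i)) / ((n:ℝ) - (i+1))^2
          = (1 / ((n : ℝ) - (i + 1)) ^ 2) * ((∑ j, (c j : ℝ)^2) / ((n:ℝ) - i)) := by
        ring
      have h3 : (1 / ((n : ℝ) - (i + 1)) ^ 2) * ((∑ j, (c j : ℝ)^2) / ((n:ℝ) - i))
          ≤ (1 / ((n : ℝ) - (i + 1)) ^ 2) *
            (3 + (∑ j, (c j : ℝ)^2) / ((n:ℝ) - i)) := by
        apply mul_le_mul_of_nonneg_left (by linarith) (by positivity)
      calc condVar c i τ ≤ _ := hcore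
        _ = _ := e
        _ ≤ _ := h3
    refine ⟨b1, ?_⟩
    have hQr : (∑ j, (c j : ℝ)^2) / ((n:ℝ) - i) ≤ 2 * a := by
      rw [div_le_iff₀ hr, hQan]
      nlinarith
    have hDn : 1 / ((n:ℝ) - (i+1))^2 ≤ 4 / (n:ℝ)^2 := by
      rw [div_le_div_iff₀ (by positivity) (by positivity)]
      nlinarith
    calc condVar c i τ
        ≤ (1 / ((n : ℝ) - (i + 1)) ^ 2) *
          (3 + (∑ j, (c j : ℝ) ^ 2) / ((n : ℝ) - i)) := b1
      _ ≤ (4 / (n:ℝ)^2) * (3 + 2 * a) := by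
          apply mul_le_mul hDn (by linarith) (by linarith) (by positivity)
      _ = 4 * (3 + 2 * a) / (n : ℝ) ^ 2 := by ring
  refine ⟨main, ?_⟩
  intro τ
  set X : ℝ := 4 * (3 + 2 * a) / (n : ℝ) ^ 2 with hX
  have hXnn : 0 ≤ X := by rw [hX]; positivity
  have heach : ∀ i ∈ Finset.range (n / 2), condVar c i τ ≤ X :=
    fun i hi => (main i (Finset.mem_range.1 hi) τ).2
  calc ∑ i ∈ Finset.range (n / 2), condVar c i τ
      ≤ (Finset.range (n / 2)).card • X := Finset.sum_le_card_nsmul _ _ _ heach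
    _ = ((n / 2 : ℕ) : ℝ) * X := by rw [Finset.card_range, nsmul_eq_mul]
    _ ≤ ((n:ℝ)/2) * X := mul_le_mul_of_nonneg_right Nat.cast_div_le hXnn
    _ = 2 * (3 + 2 * a) / n := by rw [hX]; field_simp; ring
    _ ≤ 4 * (3 + 2 * a) / n := by
        have h1 : (0:ℝ) ≤ 2 * (3 + 2 * a) / n :=
          div_nonneg (by linarith) (le_of_lt hn')
        have h2 : 4 * (3 + 2 * a) / (n:ℝ) - 2 * (3 + 2 * a) / n
            = 2 * (3 + 2 * a) / n := by ring
        linarith
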